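/- Let A and B be finite sets, G a subgroup of the symmetric group of A, and H a subgroup of the symmetric group of B. The product group G × H acts on functions into A × B componentwise by postcomposition: (g, h) · f = (u ↦ (g(f(u)₁), h(f(u)₂))). Then for every finite set U, the number of (G × H)-orbits on the set of injective functions U → A × B equals the sum, over all partial rectangles (π, τ) on U, of the product of the number of G-orbits on injective functions from the set of blocks of π into A and the number of H-orbits on injective functions from the set of blocks of τ into B. -/

import Mathlib

set_option linter.unusedSectionVars false

/-- A group acting on a type `α` acts on the injective functions `ι → α`
by postcomposition (pointwise action). -/
instance injMulAction {G α ι : Type*} [Group G] [MulAction G α] :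
    MulAction G {f : ι → α // Function.Injective f} where
  smul g f := ⟨g • (f : ι → α), (MulAction.injective g).comp f.2⟩
  one_smul f := Subtype.ext (one_smul G (f : ι → α))
  mul_smul g h f := Subtype.ext (mul_smul g h (f : ι → α))

/-- The product of two groups acting on the two factors acts componentwise on the
product. -/
instance prodProdMulAction {M N α β : Type*} [Monoid M] [Monoid N]
    [MulAction M α] [MulAction N β] : MulAction (M × N) (α × β) where
  smul g p := (g.1 • p.1, g.2 • p.2)
  one_smul p := Prod.ext (one_smul M p.1) (one_smul N p.2)
  mul_smul g h p := Prod.ext (mul_smul g.1 h.1 p.1) (mul_smul g.2 h.2 p.2)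

/-- A partial rectangle on the finite set `U`: a pair of set partitions such that
every block of the first meets every block of the second in at most one element. -/
def IsPartialRectangle {U : Type*} [Fintype U] [DecidableEq U]
    (π τ : Finpartition (Finset.univ : Finset U)) : Prop :=
  ∀ B ∈ π.parts, ∀ C ∈ τ.parts, (B ∩ C).card ≤ 1

open Finset

section KerPart

open scoped Classical

variable {U : Type*} [Fintype U] [DecidableEq U]

lemma Finpartition.part_ext (P Q : Finpartition (Finset.univ : Finset U))
    (h : ∀ a, P.part a = Q.part a) : P = Q := by
  ext b
  constructor
  · intro hb
    obtain ⟨a, ha⟩ := P.nonempty_of_mem_parts hb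
    have hb' : b = P.part a := (P.part_eq_of_mem hb ha).symm
    rw [hb', h a]
    exact Q.part_mem.mpr (mem_univ a)
  · intro hb
    obtain ⟨a, ha⟩ := Q.nonempty_of_mem_parts hb
    have hb' : b = Q.part a := (Q.part_eq_of_mem hb ha).symm
    rw [hb', ← h a]
    exact P.part_mem.mpr (mem_univ a)

noncomputable def kerPart {α : Type*} (f : U → α) : Finpartition (Finset.univ : Finset U) :=
  Finpartition.ofSetoid (Setoid.ker f)

lemma mem_part_kerPart {α : Type*} (f : U → α) {a b : U} :
    b ∈ (kerPart f).part a ↔ f a = f b :=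
  Finpartition.mem_part_ofSetoid_iff_rel

noncomputable def blockRep (π : Finpartition (Finset.univ : Finset U))
    (b : {b // b ∈ π.parts}) : U :=
  (π.nonempty_of_mem_parts b.2).choose

lemma blockRep_mem (π : Finpartition (Finset.univ : Finset U)) (b : {b // b ∈ π.parts}) :
    blockRep π b ∈ (b : Finset U) :=
  (π.nonempty_of_mem_parts b.2).choose_spec

noncomputable def quotMapOn {α : Type*} (π : Finpartition (Finset.univ : Finset U))
    (f : U → α) : {b // b ∈ π.parts} → α := fun b => f (blockRep π b)

def partSub (π : Finpartition (Finset.univ : Finset U)) (u : U) : {b // b ∈ π.parts} :=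
  ⟨π.part u, π.part_mem.mpr (mem_univ u)⟩

lemma quotMapOn_ker_apply {α : Type*} (f : U → α) (u : U) :
    quotMapOn (kerPart f) f (partSub (kerPart f) u) = f u := by
  have h := blockRep_mem (kerPart f) (partSub (kerPart f) u)
  exact ((mem_part_kerPart f).mp h).symm

lemma quotMapOn_ker_injective {α : Type*} (f : U → α) :
    Function.Injective (quotMapOn (kerPart f) f) := by
  intro b b' h
  have h1 : blockRep (kerPart f) b' ∈ (kerPart f).part (blockRep (kerPart f) b) :=
    (mem_part_kerPart f).mpr h
  have h2 : (kerPart f).part (blockRep (kerPart f) b) = b :=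
    (kerPart f).part_eq_of_mem b.2 (blockRep_mem _ _)
  have h3 : (kerPart f).part (blockRep (kerPart f) b') = b' :=
    (kerPart f).part_eq_of_mem b'.2 (blockRep_mem _ _)
  have h4 : (kerPart f).part (blockRep (kerPart f) b') = (kerPart f).part (blockRep (kerPart f) b) :=
    (kerPart f).part_eq_of_mem ((kerPart f).part_mem.mpr (mem_univ _)) h1
  exact Subtype.ext (h3 ▸ h4 ▸ h2 ▸ rfl)

lemma kerPart_comp {α β : Type*} (f : U → α) (g : α → β) (hg : Function.Injective g) :
    kerPart (fun u => g (f u)) = kerPart f := by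
  apply Finpartition.part_ext
  intro a
  ext x
  rw [mem_part_kerPart, mem_part_kerPart]
  exact hg.eq_iff

lemma kerPart_lift {α : Type*} (π : Finpartition (Finset.univ : Finset U))
    (v : {b // b ∈ π.parts} → α) (hv : Function.Injective v) :
    kerPart (fun u => v (partSub π u)) = π := by
  apply Finpartition.part_ext
  intro a
  ext x
  rw [mem_part_kerPart]
  rw [hv.eq_iff, Subtype.ext_iff]
  show π.part a = π.part x ↔ _
  rw [eq_comm]
  exact (π.mem_part_iff_part_eq_part (mem_univ x) (mem_univ a)).symm

/-- Equality of classes across equal partitions, witnessed by a group element. -/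
lemma quot_heq {G' A' : Type*} [Group G'] [MulAction G' A']
    {π π' : Finpartition (Finset.univ : Finset U)} (h : π = π') (g : G')
    {u : {b // b ∈ π.parts} → A'} {hu : Function.Injective u}
    {u' : {b // b ∈ π'.parts} → A'} {hu' : Function.Injective u'}
    (hval : ∀ (b : Finset U) (hb : b ∈ π.parts) (hb' : b ∈ π'.parts),
      u' ⟨b, hb'⟩ = g • u ⟨b, hb⟩) :
    HEq (⟦(⟨u', hu'⟩ : {f : {b // b ∈ π'.parts} → A' // Function.Injective f})⟧ :
          Quotient (MulAction.orbitRel G' {f : {b // b ∈ π'.parts} → A' // Function.Injective f}))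
        (⟦(⟨u, hu⟩ : {f : {b // b ∈ π.parts} → A' // Function.Injective f})⟧ :
          Quotient (MulAction.orbitRel G' {f : {b // b ∈ π.parts} → A' // Function.Injective f})) := by
  subst h
  refine heq_of_eq (Quotient.sound ⟨g, ?_⟩)
  exact Subtype.ext (funext fun b => (hval b b.2 b.2).symm)

end KerPart

section Main

open scoped Classical

variable {A B : Type*} [Fintype A] [Fintype B]
  (G : Subgroup (Equiv.Perm A)) (H : Subgroup (Equiv.Perm B))
  (U : Type*) [Fintype U] [DecidableEq U]

/-- The quotient by the `G`-orbit relation on injective functions from blocks of `π`. -/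
abbrev QG (π : Finpartition (Finset.univ : Finset U)) :=
  Quotient (MulAction.orbitRel G {f : {B' // B' ∈ π.parts} → A // Function.Injective f})

abbrev QH (τ : Finpartition (Finset.univ : Finset U)) :=
  Quotient (MulAction.orbitRel H {f : {C // C ∈ τ.parts} → B // Function.Injective f})

/-- The indexed disjoint union appearing on the right-hand side. -/
abbrev YY := Σ π : Finpartition (Finset.univ : Finset U),
  Σ τ : Finpartition (Finset.univ : Finset U),
    {_q : QG G U π × QH H U τ // IsPartialRectangle π τ}

lemma YY_ext {π π' τ τ' : Finpartition (Finset.univ : Finset U)}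
    {q : QG G U π × QH H U τ} {q' : QG G U π' × QH H U τ'}
    {hr : IsPartialRectangle π τ} {hr' : IsPartialRectangle π' τ'}
    (hπ : π = π') (hτ : τ = τ') (h1 : HEq q.1 q'.1) (h2 : HEq q.2 q'.2) :
    (⟨π, τ, ⟨q, hr⟩⟩ : YY G H U) = ⟨π', τ', ⟨q', hr'⟩⟩ := by
  subst hπ; subst hτ
  obtain ⟨q1, q2⟩ := q; obtain ⟨q1', q2'⟩ := q'
  cases eq_of_heq h1; cases eq_of_heq h2
  rfl

variable {U}

/-- First coordinate of an injective function into a product. -/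
noncomputable def fc1 (f : {f : U → A × B // Function.Injective f}) : U → A :=
  fun u => (f.1 u).1

noncomputable def fc2 (f : {f : U → A × B // Function.Injective f}) : U → B :=
  fun u => (f.1 u).2

lemma rect_kerPart (f : {f : U → A × B // Function.Injective f}) :
    IsPartialRectangle (kerPart (fc1 f)) (kerPart (fc2 f)) := by
  intro b hb c hc
  rw [Finset.card_le_one]
  intro u hu v hv
  rw [mem_inter] at hu hv
  have hb1 : (kerPart (fc1 f)).part u = b := (kerPart (fc1 f)).part_eq_of_mem hb hu.1
  have hc1 : (kerPart (fc2 f)).part u = c := (kerPart (fc2 f)).part_eq_of_mem hc hu.2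
  have e1 : fc1 f u = fc1 f v := (mem_part_kerPart (fc1 f)).mp (hb1 ▸ hv.1)
  have e2 : fc2 f u = fc2 f v := (mem_part_kerPart (fc2 f)).mp (hc1 ▸ hv.2)
  exact f.2 (Prod.ext e1 e2)

variable (U) in
noncomputable def fwdFun (f : {f : U → A × B // Function.Injective f}) : YY G H U :=
  ⟨kerPart (fc1 f), kerPart (fc2 f),
    ⟨(⟦⟨quotMapOn (kerPart (fc1 f)) (fc1 f), quotMapOn_ker_injective _⟩⟧,
      ⟦⟨quotMapOn (kerPart (fc2 f)) (fc2 f), quotMapOn_ker_injective _⟩⟧),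
     rect_kerPart f⟩⟩

lemma fwdFun_smul (σ : G × H) (f : {f : U → A × B // Function.Injective f}) :
    fwdFun G H U (σ • f) = fwdFun G H U f := by
  have e1 : fc1 (σ • f) = fun u => (σ.1 : Equiv.Perm A) (fc1 f u) := rfl
  have e2 : fc2 (σ • f) = fun u => (σ.2 : Equiv.Perm B) (fc2 f u) := rfl
  have hπ : kerPart (fc1 (σ • f)) = kerPart (fc1 f) := by
    rw [e1]; exact kerPart_comp _ _ (σ.1 : Equiv.Perm A).injective
  have hτ : kerPart (fc2 (σ • f)) = kerPart (fc2 f) := by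
    rw [e2]; exact kerPart_comp _ _ (σ.2 : Equiv.Perm B).injective
  refine YY_ext G H U hπ hτ ?_ ?_
  · refine quot_heq hπ.symm σ.1 ?_
    intro b hb hb'
    rfl
  · refine quot_heq hτ.symm σ.2 ?_
    intro b hb hb'
    rfl

noncomputable def liftFun (π τ : Finpartition (Finset.univ : Finset U))
    (hr : IsPartialRectangle π τ)
    (v₁ : {f : {B' // B' ∈ π.parts} → A // Function.Injective f})
    (v₂ : {f : {C // C ∈ τ.parts} → B // Function.Injective f}) :
    {f : U → A × B // Function.Injective f} :=
  ⟨fun u => (v₁.1 (partSub π u), v₂.1 (partSub τ u)), by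
    intro u v h
    rw [Prod.mk.injEq] at h
    have h1 : π.part u = π.part v := congrArg Subtype.val (v₁.2 h.1)
    have h2 : τ.part u = τ.part v := congrArg Subtype.val (v₂.2 h.2)
    have hcard := hr (π.part u) (π.part_mem.mpr (mem_univ u)) (τ.part u) (τ.part_mem.mpr (mem_univ u))
    rw [Finset.card_le_one] at hcard
    refine hcard u (mem_inter.mpr ⟨π.mem_part (mem_univ u), τ.mem_part (mem_univ u)⟩)
      v (mem_inter.mpr ⟨h1 ▸ π.mem_part (mem_univ v), h2 ▸ τ.mem_part (mem_univ v)⟩)⟩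

variable (U) in
noncomputable def bwdFun (y : YY G H U) :
    Quotient (MulAction.orbitRel (G × H) {f : U → A × B // Function.Injective f}) :=
  Quotient.lift₂ (fun v₁ v₂ => ⟦liftFun y.1 y.2.1 y.2.2.2 v₁ v₂⟧)
    (by
      intro a₁ a₂ b₁ b₂ h₁ h₂
      obtain ⟨g, rfl⟩ := h₁
      obtain ⟨h, rfl⟩ := h₂
      refine Quotient.sound ⟨(g, h), ?_⟩
      exact Subtype.ext (funext fun u => rfl))
    y.2.2.1.1 y.2.2.1.2

variable (U) in
noncomputable def mainEquiv :
    Quotient (MulAction.orbitRel (G × H) {f : U → A × B // Function.Injective f}) ≃ YY G H U where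
  toFun := Quotient.lift (fwdFun G H U)
    (by
      intro f f' h
      obtain ⟨σ, rfl⟩ := h
      exact fwdFun_smul G H σ f')
  invFun := bwdFun G H U
  left_inv := by
    intro x
    induction x using Quotient.inductionOn with
    | h f =>
      show bwdFun G H U (fwdFun G H U f) = ⟦f⟧
      show ⟦liftFun _ _ _ _ _⟧ = ⟦f⟧
      refine congrArg _ (Subtype.ext (funext fun u => ?_))
      exact Prod.ext (quotMapOn_ker_apply (fc1 f) u) (quotMapOn_ker_apply (fc2 f) u)
  right_inv := by
    intro y
    obtain ⟨π, τ, ⟨⟨q1, q2⟩, hr⟩⟩ := y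
    induction q1 using Quotient.inductionOn with
    | h v₁ =>
    induction q2 using Quotient.inductionOn with
    | h v₂ =>
      show fwdFun G H U (liftFun π τ hr v₁ v₂) = _
      have hπ : kerPart (fc1 (liftFun π τ hr v₁ v₂)) = π := kerPart_lift π v₁.1 v₁.2
      have hτ : kerPart (fc2 (liftFun π τ hr v₁ v₂)) = τ := kerPart_lift τ v₂.1 v₂.2
      refine YY_ext G H U hπ hτ ?_ ?_
      · refine quot_heq hπ.symm (1 : G) ?_
        intro b hb hb'
        show quotMapOn _ (fc1 (liftFun π τ hr v₁ v₂)) ⟨b, hb'⟩ = (1 : G) • v₁.1 ⟨b, hb⟩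
        rw [one_smul]
        show v₁.1 (partSub π (blockRep _ ⟨b, hb'⟩)) = v₁.1 ⟨b, hb⟩
        exact congrArg v₁.1 (Subtype.ext (π.part_eq_of_mem hb (blockRep_mem _ ⟨b, hb'⟩)))
      · refine quot_heq hτ.symm (1 : H) ?_
        intro b hb hb'
        show quotMapOn _ (fc2 (liftFun π τ hr v₁ v₂)) ⟨b, hb'⟩ = (1 : H) • v₂.1 ⟨b, hb⟩
        rw [one_smul]
        show v₂.1 (partSub τ (blockRep _ ⟨b, hb'⟩)) = v₂.1 ⟨b, hb⟩
        exact congrArg v₂.1 (Subtype.ext (τ.part_eq_of_mem hb (blockRep_mem _ ⟨b, hb'⟩)))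

end Main

lemma natCard_sigma {ι : Type*} [Fintype ι] (f : ι → Type*) [∀ i, Finite (f i)] :
    Nat.card (Σ i, f i) = ∑ i, Nat.card (f i) := by
  classical
  letI : ∀ i, Fintype (f i) := fun i => Fintype.ofFinite _
  simp only [Nat.card_eq_fintype_card]
  exact Fintype.card_sigma

open scoped Classical in
/-- For finite sets `A`, `B`, subgroups `G`, `H` of their symmetric groups, with
`G × H` acting componentwise by postcomposition on functions into `A × B`, and for
every finite set `U`: the number of `(G × H)`-orbits of injective functions
`U → A × B` is the sum, over partial rectangles `(π, τ)` on `U`, of the number of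
`G`-orbits of injective functions (blocks of π) → A times the number of `H`-orbits
of injective functions (blocks of τ) → B. -/
theorem card_orbits_product_action
    (A B : Type*) [Fintype A] [Fintype B]
    (G : Subgroup (Equiv.Perm A)) (H : Subgroup (Equiv.Perm B))
    (U : Type*) [Fintype U] [DecidableEq U] :
    Nat.card (Quotient (MulAction.orbitRel (G × H)
        {f : U → A × B // Function.Injective f})) =
      ∑ π : Finpartition (Finset.univ : Finset U),
        ∑ τ : Finpartition (Finset.univ : Finset U),
          if IsPartialRectangle π τ then
            Nat.card (Quotient (MulAction.orbitRel G
              {f : {B' // B' ∈ π.parts} → A // Function.Injective f})) *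
            Nat.card (Quotient (MulAction.orbitRel H
              {f : {C // C ∈ τ.parts} → B // Function.Injective f}))
          else 0 := by
  rw [Nat.card_congr (mainEquiv G H U), natCard_sigma]
  refine Finset.sum_congr rfl fun π _ => ?_
  rw [natCard_sigma]
  refine Finset.sum_congr rfl fun τ _ => ?_
  by_cases hr : IsPartialRectangle π τ
  · rw [if_pos hr, ← Nat.card_prod]
    exact Nat.card_congr (Equiv.subtypeUnivEquiv fun _ => hr)
  · rw [if_neg hr]
    haveI : IsEmpty {_q : QG G U π × QH H U τ // IsPartialRectangle π τ} :=
      ⟨fun q => hr q.2⟩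
    exact Nat.card_of_isEmpty
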